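/- arXiv:1908.11797 — 7 statements merged into one kernel-verified Lean document; each statement's English description precedes it below -/
import Mathlib

section
/- Fix integers Q, A, S with 0 ≤ A ≤ S and A ≤ Q, a matrix γ : {0,…,A}×{0,…,A} → ℝ with γ(a,a') ≥ 0 and Σ_{a'=0}^{A} γ(a,a') = 1 for every a, a power function P : {0,…,S} → ℝ, and a real α > 0. Suppose π : {0,…,Q}×{0,…,A} → ℝ and f : {0,…,Q}×{0,…,A}×{0,…,S} → ℝ satisfy: π(q,a) ≥ 0 for all q,a; Σ_{q=0}^{Q} Σ_{a=0}^{A} π(q,a) = 1; f(q,a,s) ≥ 0 for all q,a,s; Σ_{s=0}^{S} f(q,a,s) = 1 for all q,a; f(q,a,s) = 0 whenever s ∉ 𝒮(q); and the balance equations: for all q' ∈ {0,…,Q} and a' ∈ {0,…,A}, Σ_{q=0}^{Q} Σ_{a=0}^{A} Σ_{s=0}^{S} π(q,a)·f(q,a,s)·γ(a,a')·1{q' = q − s + a'} = π(q',a'). Define x(q,a,s) := π(q,a)·f(q,a,s). Then x satisfies: x(q,a,s) ≥ 0 for all q,a,s; x(q,a,s) = 0 whenever s ∉ 𝒮(q);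 Σ_{q=0}^{Q} Σ_{a=0}^{A} Σ_{s=0}^{S} x(q,a,s) = 1; for all q' ∈ {0,…,Q} and a' ∈ {0,…,A}, Σ_{q=0}^{Q} Σ_{a=0}^{A} Σ_{s=0}^{S} γ(a,a')·x(q,a,s)·1{s = q + a' − q'} = Σ_{s=0}^{S} x(q',a',s); and moreover (1/α)·Σ_{q,a,s} q·x(q,a,s) = (1/α)·Σ_{q,a} q·π(q,a) and Σ_{q,a,s} P(s)·x(q,a,s) = Σ_{q,a,s} P(s)·π(q,a)·f(q,a,s). -/
open Finset

/-- Feasible transmission-rate set 𝒮(q) = {s : max(q−Q+A,0) ≤ s ≤ min(q,S)},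
expressed as a predicate on natural numbers via integer inequalities. -/
def feasibleRate (Q A S q s : ℕ) : Prop :=
  (q : ℤ) - (Q : ℤ) + (A : ℤ) ≤ (s : ℤ) ∧ (s : ℤ) ≤ min (q : ℤ) (S : ℤ)

/-- Forward direction of Theorem 1: from a steady-state distribution π and a
probabilistic policy f satisfying the balance equations, the state-action
frequencies x(q,a,s) = π(q,a)·f(q,a,s) are feasible for the LP and achieve
the same average delay and average power. -/
theorem cmdp_to_lp_forward
    (Q A S : ℕ) (hAS : A ≤ S) (hAQ : A ≤ Q)
    (γ : ℕ → ℕ → ℝ)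
    (hγ0 : ∀ a ∈ range (A + 1), ∀ a' ∈ range (A + 1), 0 ≤ γ a a')
    (hγ1 : ∀ a ∈ range (A + 1), ∑ a' ∈ range (A + 1), γ a a' = 1)
    (P : ℕ → ℝ) (α : ℝ) (hα : 0 < α)
    (pi : ℕ → ℕ → ℝ) (f : ℕ → ℕ → ℕ → ℝ)
    (hpi0 : ∀ q ∈ range (Q + 1), ∀ a ∈ range (A + 1), 0 ≤ pi q a)
    (hpi1 : ∑ q ∈ range (Q + 1), ∑ a ∈ range (A + 1), pi q a = 1)
    (hf0 : ∀ q ∈ range (Q + 1), ∀ a ∈ range (A + 1), ∀ s ∈ range (S + 1), 0 ≤ f q a s)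
    (hf1 : ∀ q ∈ range (Q + 1), ∀ a ∈ range (A + 1), ∑ s ∈ range (S + 1), f q a s = 1)
    (hfeas : ∀ q ∈ range (Q + 1), ∀ a ∈ range (A + 1), ∀ s ∈ range (S + 1),
      ¬ feasibleRate Q A S q s → f q a s = 0)
    (hbal : ∀ q' ∈ range (Q + 1), ∀ a' ∈ range (A + 1),
      ∑ q ∈ range (Q + 1), ∑ a ∈ range (A + 1), ∑ s ∈ range (S + 1),
        pi q a * f q a s * γ a a' *
          (if (q' : ℤ) = (q : ℤ) - (s : ℤ) + (a' : ℤ) then (1 : ℝ) else 0)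
        = pi q' a')
    (x : ℕ → ℕ → ℕ → ℝ)
    (hx : ∀ q a s, x q a s = pi q a * f q a s) :
    (∀ q ∈ range (Q + 1), ∀ a ∈ range (A + 1), ∀ s ∈ range (S + 1), 0 ≤ x q a s) ∧
    (∀ q ∈ range (Q + 1), ∀ a ∈ range (A + 1), ∀ s ∈ range (S + 1),
      ¬ feasibleRate Q A S q s → x q a s = 0) ∧
    (∑ q ∈ range (Q + 1), ∑ a ∈ range (A + 1), ∑ s ∈ range (S + 1), x q a s = 1) ∧
    (∀ q' ∈ range (Q + 1), ∀ a' ∈ range (A + 1),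
      ∑ q ∈ range (Q + 1), ∑ a ∈ range (A + 1), ∑ s ∈ range (S + 1),
        γ a a' * x q a s *
          (if (s : ℤ) = (q : ℤ) + (a' : ℤ) - (q' : ℤ) then (1 : ℝ) else 0)
        = ∑ s ∈ range (S + 1), x q' a' s) ∧
    ((1 / α) * ∑ q ∈ range (Q + 1), ∑ a ∈ range (A + 1), ∑ s ∈ range (S + 1),
        (q : ℝ) * x q a s
      = (1 / α) * ∑ q ∈ range (Q + 1), ∑ a ∈ range (A + 1), (q : ℝ) * pi q a) ∧
    (∑ q ∈ range (Q + 1), ∑ a ∈ range (A + 1), ∑ s ∈ range (S + 1), P s * x q a s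
      = ∑ q ∈ range (Q + 1), ∑ a ∈ range (A + 1), ∑ s ∈ range (S + 1),
          P s * pi q a * f q a s) := by
  refine ⟨?_, ?_, ?_, ?_, ?_, ?_⟩
  · intro q hq a ha s hs
    rw [hx]
    exact mul_nonneg (hpi0 q hq a ha) (hf0 q hq a ha s hs)
  · intro q hq a ha s hs hns
    rw [hx, hfeas q hq a ha s hs hns, mul_zero]
  · calc ∑ q ∈ range (Q + 1), ∑ a ∈ range (A + 1), ∑ s ∈ range (S + 1), x q a s
        = ∑ q ∈ range (Q + 1), ∑ a ∈ range (A + 1), pi q a := by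
          refine Finset.sum_congr rfl fun q hq => Finset.sum_congr rfl fun a ha => ?_
          simp only [hx, ← mul_sum, hf1 q hq a ha, mul_one]
      _ = 1 := hpi1
  · intro q' hq' a' ha'
    have h1 : ∑ q ∈ range (Q + 1), ∑ a ∈ range (A + 1), ∑ s ∈ range (S + 1),
        γ a a' * x q a s *
          (if (s : ℤ) = (q : ℤ) + (a' : ℤ) - (q' : ℤ) then (1 : ℝ) else 0)
        = pi q' a' := by
      rw [← hbal q' hq' a' ha']
      refine Finset.sum_congr rfl fun q hq => Finset.sum_congr rfl fun a ha =>
        Finset.sum_congr rfl fun s hs => ?_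
      rw [hx]
      have : ((s : ℤ) = (q : ℤ) + (a' : ℤ) - (q' : ℤ)) ↔
          ((q' : ℤ) = (q : ℤ) - (s : ℤ) + (a' : ℤ)) := by omega
      rw [if_congr this rfl rfl]; ring
    have h2 : ∑ s ∈ range (S + 1), x q' a' s = pi q' a' := by
      simp only [hx, ← mul_sum, hf1 q' hq' a' ha', mul_one]
    rw [h1, h2]
  · congr 1
    refine Finset.sum_congr rfl fun q hq => Finset.sum_congr rfl fun a ha => ?_
    simp only [hx]
    rw [show ∀ c : ℝ, (∑ s ∈ range (S+1), (q:ℝ) * (pi q a * f q a s)) = (q:ℝ) * pi q a * (∑ s ∈ range (S+1), f q a s) from fun c => by rw [mul_sum]; ring_nf, hf1 q hq a ha, mul_one]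
    exact 0
  · simp only [hx, mul_assoc]
end

section
/- Fix integers Q, A, S with 0 ≤ A ≤ S and A ≤ Q, a matrix γ : {0,…,A}×{0,…,A} → ℝ with γ(a,a') ≥ 0 and Σ_{a'=0}^{A} γ(a,a') = 1 for every a, and a power function P : {0,…,S} → ℝ. Suppose x : {0,…,Q}×{0,…,A}×{0,…,S} → ℝ satisfies: x(q,a,s) ≥ 0 for all q,a,s; x(q,a,s) = 0 whenever s ∉ 𝒮(q); Σ_{q=0}^{Q} Σ_{a=0}^{A} Σ_{s=0}^{S} x(q,a,s) = 1; and for all q' ∈ {0,…,Q} and a' ∈ {0,…,A}, Σ_{q=0}^{Q} Σ_{a=0}^{A} Σ_{s=0}^{S} γ(a,a')·x(q,a,s)·1{s = q + a' − q'} = Σ_{s=0}^{S} x(q',a',s). Define π(q,a) := Σ_{s=0}^{S} x(q,a,s), and define f(q,a,s) := x(q,a,s)/π(q,a) if π(q,a) > 0, and f(q,a,s) := 1{s = min(q,S)} if π(q,a) = 0. Then: π(q,a) ≥ 0 for all q,a; Σ_{q,a} π(q,a) = 1; f(q,a,s) ≥ 0 for all q,a,s; Σ_{s=0}^{S} f(q,a,s)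 = 1 for all q,a; f(q,a,s) = 0 whenever s ∉ 𝒮(q); π(q,a)·f(q,a,s) = x(q,a,s) for all q,a,s; and the balance equations hold: for all q' ∈ {0,…,Q} and a' ∈ {0,…,A}, Σ_{q=0}^{Q} Σ_{a=0}^{A} Σ_{s=0}^{S} π(q,a)·f(q,a,s)·γ(a,a')·1{q' = q − s + a'} = π(q',a'). In particular Σ_{q,a,s} P(s)·π(q,a)·f(q,a,s) = Σ_{q,a,s} P(s)·x(q,a,s) and Σ_{q,a,s} q·π(q,a)·f(q,a,s) = Σ_{q,a,s} q·x(q,a,s). -/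
open Finset

/-- Backward direction of Theorem 1: from a feasible LP solution x (the
state-action frequencies), the steady-state probabilities π(q,a) = Σ_s x(q,a,s)
and the constructed policy f (Eq. (15)) form a feasible solution of the CMDP
with the same average delay and average power. -/
theorem lp_to_cmdp_backward
    (Q A S : ℕ) (hAS : A ≤ S) (hAQ : A ≤ Q)
    (γ : ℕ → ℕ → ℝ)
    (hγ0 : ∀ a ∈ range (A + 1), ∀ a' ∈ range (A + 1), 0 ≤ γ a a')
    (hγ1 : ∀ a ∈ range (A + 1), ∑ a' ∈ range (A + 1), γ a a' = 1)
    (P : ℕ → ℝ)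
    (x : ℕ → ℕ → ℕ → ℝ)
    (hx0 : ∀ q ∈ range (Q + 1), ∀ a ∈ range (A + 1), ∀ s ∈ range (S + 1), 0 ≤ x q a s)
    (hxfeas : ∀ q ∈ range (Q + 1), ∀ a ∈ range (A + 1), ∀ s ∈ range (S + 1),
      ¬ feasibleRate Q A S q s → x q a s = 0)
    (hx1 : ∑ q ∈ range (Q + 1), ∑ a ∈ range (A + 1), ∑ s ∈ range (S + 1), x q a s = 1)
    (hxbal : ∀ q' ∈ range (Q + 1), ∀ a' ∈ range (A + 1),
      ∑ q ∈ range (Q + 1), ∑ a ∈ range (A + 1), ∑ s ∈ range (S + 1),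
        γ a a' * x q a s *
          (if (s : ℤ) = (q : ℤ) + (a' : ℤ) - (q' : ℤ) then (1 : ℝ) else 0)
        = ∑ s ∈ range (S + 1), x q' a' s)
    (pi : ℕ → ℕ → ℝ) (f : ℕ → ℕ → ℕ → ℝ)
    (hpi : ∀ q a, pi q a = ∑ s ∈ range (S + 1), x q a s)
    (hfpos : ∀ q a s, 0 < pi q a → f q a s = x q a s / pi q a)
    (hfzero : ∀ q a s, pi q a = 0 →
      f q a s = (if s = min q S then (1 : ℝ) else 0)) :
    (∀ q ∈ range (Q + 1), ∀ a ∈ range (A + 1), 0 ≤ pi q a) ∧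
    (∑ q ∈ range (Q + 1), ∑ a ∈ range (A + 1), pi q a = 1) ∧
    (∀ q ∈ range (Q + 1), ∀ a ∈ range (A + 1), ∀ s ∈ range (S + 1), 0 ≤ f q a s) ∧
    (∀ q ∈ range (Q + 1), ∀ a ∈ range (A + 1), ∑ s ∈ range (S + 1), f q a s = 1) ∧
    (∀ q ∈ range (Q + 1), ∀ a ∈ range (A + 1), ∀ s ∈ range (S + 1),
      ¬ feasibleRate Q A S q s → f q a s = 0) ∧
    (∀ q ∈ range (Q + 1), ∀ a ∈ range (A + 1), ∀ s ∈ range (S + 1),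
      pi q a * f q a s = x q a s) ∧
    (∀ q' ∈ range (Q + 1), ∀ a' ∈ range (A + 1),
      ∑ q ∈ range (Q + 1), ∑ a ∈ range (A + 1), ∑ s ∈ range (S + 1),
        pi q a * f q a s * γ a a' *
          (if (q' : ℤ) = (q : ℤ) - (s : ℤ) + (a' : ℤ) then (1 : ℝ) else 0)
        = pi q' a') ∧
    (∑ q ∈ range (Q + 1), ∑ a ∈ range (A + 1), ∑ s ∈ range (S + 1),
        P s * pi q a * f q a s
      = ∑ q ∈ range (Q + 1), ∑ a ∈ range (A + 1), ∑ s ∈ range (S + 1), P s * x q a s) ∧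
    (∑ q ∈ range (Q + 1), ∑ a ∈ range (A + 1), ∑ s ∈ range (S + 1),
        (q : ℝ) * pi q a * f q a s
      = ∑ q ∈ range (Q + 1), ∑ a ∈ range (A + 1), ∑ s ∈ range (S + 1),
          (q : ℝ) * x q a s) := by
  -- basic facts
  have hpi0 : ∀ q ∈ range (Q + 1), ∀ a ∈ range (A + 1), 0 ≤ pi q a := by
    intro q hq a ha
    rw [hpi]
    exact Finset.sum_nonneg fun s hs => hx0 q hq a ha s hs
  have hxz : ∀ q ∈ range (Q + 1), ∀ a ∈ range (A + 1), pi q a = 0 →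
      ∀ s ∈ range (S + 1), x q a s = 0 := by
    intro q hq a ha hz s hs
    have := (Finset.sum_eq_zero_iff_of_nonneg
      (fun s hs => hx0 q hq a ha s hs)).mp ((hpi q a).symm.trans hz)
    exact this s hs
  have hpf : ∀ q ∈ range (Q + 1), ∀ a ∈ range (A + 1), ∀ s ∈ range (S + 1),
      pi q a * f q a s = x q a s := by
    intro q hq a ha s hs
    rcases lt_or_eq_of_le (hpi0 q hq a ha) with hlt | heq
    · rw [hfpos q a s hlt]
      field_simp
    · rw [← heq, zero_mul, (hxz q hq a ha heq.symm s hs)]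
  refine ⟨hpi0, ?_, ?_, ?_, ?_, hpf, ?_, ?_, ?_⟩
  · -- sum pi = 1
    calc ∑ q ∈ range (Q + 1), ∑ a ∈ range (A + 1), pi q a
        = ∑ q ∈ range (Q + 1), ∑ a ∈ range (A + 1), ∑ s ∈ range (S + 1), x q a s := by
          refine Finset.sum_congr rfl fun q hq => Finset.sum_congr rfl fun a ha => hpi q a
      _ = 1 := hx1
  · -- f ≥ 0
    intro q hq a ha s hs
    rcases lt_or_eq_of_le (hpi0 q hq a ha) with hlt | heq
    · rw [hfpos q a s hlt]
      exact div_nonneg (hx0 q hq a ha s hs) (le_of_lt hlt)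
    · rw [hfzero q a s heq.symm]
      positivity
  · -- sum f = 1
    intro q hq a ha
    rcases lt_or_eq_of_le (hpi0 q hq a ha) with hlt | heq
    · have : ∑ s ∈ range (S + 1), f q a s = (∑ s ∈ range (S + 1), x q a s) / pi q a := by
        rw [Finset.sum_div]
        exact Finset.sum_congr rfl fun s hs => hfpos q a s hlt
      rw [this, ← hpi, div_self (ne_of_gt hlt)]
    · have : ∑ s ∈ range (S + 1), f q a s
          = ∑ s ∈ range (S + 1), (if s = min q S then (1 : ℝ) else 0) :=
        Finset.sum_congr rfl fun s hs => hfzero q a s heq.symm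
      rw [this, Finset.sum_ite_eq' (range (S + 1)) (min q S) (fun _ => (1 : ℝ))]
      simp [Nat.lt_succ_iff, min_le_right]
  · -- feasibility of f
    intro q hq a ha s hs hnf
    rcases lt_or_eq_of_le (hpi0 q hq a ha) with hlt | heq
    · rw [hfpos q a s hlt, hxfeas q hq a ha s hs hnf, zero_div]
    · rw [hfzero q a s heq.symm]
      have hfeasmin : feasibleRate Q A S q (min q S) := by
        constructor
        · have hq' : q ≤ Q := Nat.lt_succ_iff.mp (Finset.mem_range.mp hq)
          have h1 : (q : ℤ) - Q + A ≤ (q : ℤ) := by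
            have : (A : ℤ) ≤ Q := by exact_mod_cast hAQ
            omega
          have h2 : (q : ℤ) - Q + A ≤ (S : ℤ) := by
            have hA : (A : ℤ) ≤ S := by exact_mod_cast hAS
            have : (q : ℤ) ≤ Q := by exact_mod_cast hq'
            omega
          have : ((min q S : ℕ) : ℤ) = min (q : ℤ) (S : ℤ) := by
            simp [Nat.cast_min]
          rw [this]
          exact le_min h1 h2
        · simp [Nat.cast_min]
      have : s ≠ min q S := fun h => hnf (h ▸ hfeasmin)
      simp [this]
  · -- balance equations
    intro q' hq' a' ha'
    have := hxbal q' hq' a' ha'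
    calc ∑ q ∈ range (Q + 1), ∑ a ∈ range (A + 1), ∑ s ∈ range (S + 1),
          pi q a * f q a s * γ a a' *
            (if (q' : ℤ) = (q : ℤ) - (s : ℤ) + (a' : ℤ) then (1 : ℝ) else 0)
        = ∑ q ∈ range (Q + 1), ∑ a ∈ range (A + 1), ∑ s ∈ range (S + 1),
            γ a a' * x q a s *
              (if (s : ℤ) = (q : ℤ) + (a' : ℤ) - (q' : ℤ) then (1 : ℝ) else 0) := by
          refine Finset.sum_congr rfl fun q hq => Finset.sum_congr rfl fun a ha =>
            Finset.sum_congr rfl fun s hs => ?_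
          rw [hpf q hq a ha s hs]
          have hiff : ((q' : ℤ) = (q : ℤ) - (s : ℤ) + (a' : ℤ)) ↔
              ((s : ℤ) = (q : ℤ) + (a' : ℤ) - (q' : ℤ)) := by omega
          rw [if_congr hiff rfl rfl]
          ring
      _ = ∑ s ∈ range (S + 1), x q' a' s := this
      _ = pi q' a' := (hpi q' a').symm
  · refine Finset.sum_congr rfl fun q hq => Finset.sum_congr rfl fun a ha =>
      Finset.sum_congr rfl fun s hs => ?_
    rw [mul_assoc, hpf q hq a ha s hs]
  · refine Finset.sum_congr rfl fun q hq => Finset.sum_congr rfl fun a ha =>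
      Finset.sum_congr rfl fun s hs => ?_
    rw [mul_assoc, hpf q hq a ha s hs]
end

section
/- Let R ⊆ ℝ × ℝ be a convex set of (power, delay) pairs. Suppose (P₁, D₁) ∈ R, (P₃, D₃) ∈ R, and (P₂, D₂) belongs to the Pareto frontier L(R), with P₁ < P₂ ≤ P₃. Then (P₃ − P₁)·D₂ ≤ (P₃ − P₂)·D₁ + (P₂ − P₁)·D₃. In other words, the Pareto frontier of a convex set lies below every chord of R, so the optimal delay-power tradeoff curve is convex. -/
/-!
Points of `R` with strictly less power than a frontier point `(P₂, D₂)` have delay at least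
`D₂`, and so do their limits. The chord point `(P₂, c)` between `(P₁, D₁)` and `(P₃, D₃)` is such
a limit, since the segment from `(P₁, D₁)` to it has power `< P₂` away from its endpoint; hence
`D₂ ≤ c`, which is the claimed inequality after clearing the denominator `P₃ - P₁`.
-/

/-- The Pareto frontier (optimal delay-power tradeoff set) of a set of
(power, delay) pairs: points of R such that every point of R has either
at least as much power or at least as much delay. -/
def paretoFrontier (R : Set (ℝ × ℝ)) : Set (ℝ × ℝ) :=
  {p | p ∈ R ∧ ∀ q ∈ R, p.1 ≤ q.1 ∨ p.2 ≤ q.2}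

theorem Convex.mem_closure_sep_lt_of_le {E : Type*} [AddCommGroup E] [TopologicalSpace E]
    [ContinuousAdd E] [Module ℝ E] [ContinuousSMul ℝ E] {R : Set E} (hR : Convex ℝ R)
    (f : E →ₗ[ℝ] ℝ) {c : ℝ} {x z : E} (hx : x ∈ R) (hz : z ∈ R) (hxc : f x < c)
    (hzc : f z ≤ c) : z ∈ closure {w ∈ R | f w < c} := by
  refine closure_mono ?_ (segment_subset_closure_openSegment (right_mem_segment ℝ x z))
  rintro _ hw
  refine ⟨hR.openSegment_subset hx hz hw, ?_⟩
  obtain ⟨a, b, ha, hb, hab, rfl⟩ := hw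
  rw [map_add, map_smul, map_smul, smul_eq_mul, smul_eq_mul]
  calc a * f x + b * f z < a * c + b * c :=
        add_lt_add_of_lt_of_le (mul_lt_mul_of_pos_left hxc ha) (mul_le_mul_of_nonneg_left hzc hb.le)
    _ = c := by rw [← add_mul, hab, one_mul]

theorem paretoFrontier_snd_le_of_mem_closure {R : Set (ℝ × ℝ)} {p q : ℝ × ℝ}
    (hp : p ∈ paretoFrontier R) (hq : q ∈ closure {w ∈ R | w.1 < p.1}) : p.2 ≤ q.2 := by
  refine closure_minimal (fun w hw => ?_) (isClosed_le continuous_const continuous_snd) hq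
  exact (hp.2 w hw.1).resolve_left (not_le.mpr hw.2)

/-- The 'convex' part of Theorem 2: the Pareto frontier of a convex achievable
region lies below every chord of R. -/
theorem paretoFrontier_convex
    (R : Set (ℝ × ℝ)) (hR : Convex ℝ R)
    (P₁ D₁ P₂ D₂ P₃ D₃ : ℝ)
    (h₁ : (P₁, D₁) ∈ R) (h₃ : (P₃, D₃) ∈ R)
    (h₂ : (P₂, D₂) ∈ paretoFrontier R)
    (h₁₂ : P₁ < P₂) (h₂₃ : P₂ ≤ P₃) :
    (P₃ - P₁) * D₂ ≤ (P₃ - P₂) * D₁ + (P₂ - P₁) * D₃ := by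
  have hP : 0 < P₃ - P₁ := by linarith
  set z : ℝ × ℝ := ((P₃ - P₂) / (P₃ - P₁)) • (P₁, D₁) + ((P₂ - P₁) / (P₃ - P₁)) • (P₃, D₃)
  have hzR : z ∈ R := hR h₁ h₃ (div_nonneg (by linarith) hP.le) (div_nonneg (by linarith) hP.le)
    (by field_simp; ring)
  have hz₁ : z.1 = P₂ := by simp only [z, Prod.fst_add, Prod.smul_fst, smul_eq_mul]; field_simp; ring
  have hz₂ : z.2 = ((P₃ - P₂) * D₁ + (P₂ - P₁) * D₃) / (P₃ - P₁) := by
    simp only [z, Prod.snd_add, Prod.smul_snd, smul_eq_mul]; field_simp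
  have hD₂ : D₂ ≤ z.2 := paretoFrontier_snd_le_of_mem_closure h₂ <|
    hR.mem_closure_sep_lt_of_le (LinearMap.fst ℝ ℝ ℝ) h₁ hzR h₁₂ hz₁.le
  rwa [hz₂, le_div_iff₀ hP, mul_comm] at hD₂
end

section
/- Let F be a finite subset of ℝ × ℝ and let R be the convex hull of F. Then every point of the Pareto frontier L(R) lies on a segment joining two points of F: for each x ∈ L(R) there exist v, w ∈ F with x ∈ [v, w] (the closed segment from v to w). Consequently the optimal delay-power tradeoff set of a planar polytope is piecewise linear. -/
open Set

/-- The 'piecewise linear' part of Theorem 2: every point of the Pareto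
frontier of the convex hull of a finite planar set F lies on a segment
joining two points of F. -/
theorem paretoFrontier_piecewise_linear
    (F : Finset (ℝ × ℝ)) (R : Set (ℝ × ℝ))
    (hR : R = convexHull ℝ (↑F : Set (ℝ × ℝ))) :
    ∀ x ∈ paretoFrontier R, ∃ v ∈ F, ∃ w ∈ F, x ∈ segment ℝ v w := by
  intro x hx
  obtain ⟨hxR, hpar⟩ := hx
  rw [hR] at hxR
  obtain ⟨ι, hft, z, w, hzF, hai, hwpos, hwsum, hxeq⟩ :=
    eq_pos_convex_span_of_mem_convexHull hxR
  have hzF' : ∀ i, z i ∈ F := fun i => hzF ⟨i, rfl⟩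
  have hfinrank : Module.finrank ℝ (ℝ × ℝ) = 2 := by
    simp [Module.finrank_prod]
  have hcard : Fintype.card ι ≤ 3 := by
    have h1 := hai.card_le_finrank_succ
    have h2 : Module.finrank ℝ (vectorSpan ℝ (Set.range z)) ≤ 2 := by
      rw [← hfinrank]
      exact Submodule.finrank_le _
    omega
  by_cases h3 : Fintype.card ι = 3
  · -- triangle case: x is in the interior, contradicting Pareto optimality
    exfalso
    have htop : affineSpan ℝ (Set.range z) = ⊤ :=
      hai.affineSpan_eq_top_iff_card_eq_finrank_add_one.mpr (by rw [h3, hfinrank])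
    let b : AffineBasis ι ℝ (ℝ × ℝ) := ⟨z, hai, htop⟩
    have hwsum' : (Finset.univ : Finset ι).sum w = 1 := hwsum
    have hcomb : (Finset.univ : Finset ι).affineCombination ℝ z w = x := by
      rw [Finset.affineCombination_eq_linear_combination _ _ _ hwsum']
      exact hxeq
    have hx_int : x ∈ interior (convexHull ℝ (Set.range z)) := by
      have : (Set.range (b : ι → ℝ × ℝ)) = Set.range z := rfl
      rw [← this, b.interior_convexHull]
      intro i
      have : b.coord i x = w i := by
        rw [← hcomb]
        exact b.coord_apply_combination_of_mem (Finset.mem_univ i) hwsum'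
      rw [this]
      exact hwpos i
    obtain ⟨ε, hε, hball⟩ := Metric.mem_nhds_iff.mp (mem_interior_iff_mem_nhds.mp hx_int)
    set q : ℝ × ℝ := x - (ε/2, ε/2) with hq
    have hqball : q ∈ Metric.ball x ε := by
      rw [Metric.mem_ball, dist_eq_norm, hq]
      have : x - (ε/2, ε/2) - x = -(ε/2, ε/2) := by ring
      rw [this, norm_neg]
      have : ‖((ε/2 : ℝ), (ε/2 : ℝ))‖ = ε/2 := by
        rw [Prod.norm_def]
        simp only [Real.norm_eq_abs, max_self]
        rw [abs_of_pos (by linarith : (0:ℝ) < ε/2)]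
      rw [this]; linarith
    have hqR : q ∈ R := by
      rw [hR]
      exact convexHull_mono hzF (hball hqball)
    have := hpar q hqR
    have hq1 : q.1 = x.1 - ε/2 := rfl
    have hq2 : q.2 = x.2 - ε/2 := rfl
    rcases this with h | h <;> [rw [hq1] at h; rw [hq2] at h] <;> linarith
  · -- at most two points: x lies on a segment directly
    have hcard2 : Fintype.card ι ≤ 2 := by omega
    interval_cases h : Fintype.card ι
    · exfalso
      have : IsEmpty ι := Fintype.card_eq_zero_iff.mp h
      rw [Finset.univ_eq_empty, Finset.sum_empty] at hwsum
      norm_num at hwsum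
    · obtain ⟨i, hi⟩ := Fintype.card_eq_one_iff.mp h
      have hw1 : w i = 1 := by
        rw [← hwsum, Fintype.sum_eq_single i (fun j hj => absurd (hi j) hj)]
      have : x = z i := by
        rw [← hxeq, Fintype.sum_eq_single i (fun j hj => absurd (hi j) hj), hw1, one_smul]
      exact ⟨z i, hzF' i, z i, hzF' i, this ▸ left_mem_segment ℝ _ _⟩
    · let e := Fintype.equivFinOfCardEq h
      have hsum2 : w (e.symm 0) + w (e.symm 1) = 1 := by
        rw [← hwsum, ← Equiv.sum_comp e.symm w, Fin.sum_univ_two]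
      have hx2 : w (e.symm 0) • z (e.symm 0) + w (e.symm 1) • z (e.symm 1) = x := by
        rw [← hxeq, ← Equiv.sum_comp e.symm (fun i => w i • z i), Fin.sum_univ_two]
      exact ⟨z (e.symm 0), hzF' _, z (e.symm 1), hzF' _,
        w (e.symm 0), w (e.symm 1), (hwpos _).le, (hwpos _).le, hsum2, hx2⟩
end

section
/- Let g : ℤ → ℝ and ν : ℤ → ℝ be discretely convex, let l ≤ u be integers, and let q ∈ ℤ. For an integer r, define W_r(s) := g(s) + ν(r − s). Suppose s₁ is the least minimizer of W_q over the integer interval [l, u] (i.e., s₁ ∈ [l, u], W_q(s₁) ≤ W_q(s) for all s ∈ [l, u], and s₁ ≤ s for every minimizer s of W_q over [l, u]), and suppose s₂ is the least minimizer of W_{q+1} over [l, u]. Then s₁ ≤ s₂ ≤ s₁ + 1. -/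
/-- A function f : ℤ → ℝ is discretely convex if its increments are
nondecreasing, equivalently f(x−1) + f(x+1) ≥ 2f(x) for all x. -/
def DiscreteConvex (f : ℤ → ℝ) : Prop :=
  ∀ x : ℤ, 2 * f x ≤ f (x - 1) + f (x + 1)

/-- Monotone-minimizer step of Theorem 5 (Appendix B): for the value function
W_r(s) = g(s) + ν(r − s) with g, ν discretely convex, the least minimizer over
the integer interval [l, u] increases by at most one when q increases by one. -/
theorem least_minimizer_monotone
    (g ν : ℤ → ℝ) (hg : DiscreteConvex g) (hν : DiscreteConvex ν)
    (l u : ℤ) (hlu : l ≤ u) (q : ℤ) (s₁ s₂ : ℤ)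
    (hs₁mem : s₁ ∈ Set.Icc l u)
    (hs₁min : ∀ s ∈ Set.Icc l u, g s₁ + ν (q - s₁) ≤ g s + ν (q - s))
    (hs₁least : ∀ s ∈ Set.Icc l u,
      (∀ t ∈ Set.Icc l u, g s + ν (q - s) ≤ g t + ν (q - t)) → s₁ ≤ s)
    (hs₂mem : s₂ ∈ Set.Icc l u)
    (hs₂min : ∀ s ∈ Set.Icc l u, g s₂ + ν (q + 1 - s₂) ≤ g s + ν (q + 1 - s))
    (hs₂least : ∀ s ∈ Set.Icc l u,
      (∀ t ∈ Set.Icc l u, g s + ν (q + 1 - s) ≤ g t + ν (q + 1 - t)) → s₂ ≤ s) :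
    s₁ ≤ s₂ ∧ s₂ ≤ s₁ + 1 := by
  have inc : ∀ (f : ℤ → ℝ), DiscreteConvex f → ∀ a b : ℤ, a ≤ b →
      f (a + 1) + f b ≤ f a + f (b + 1) := by
    intro f hf a b hab
    obtain ⟨n, rfl⟩ : ∃ n : ℕ, b = a + n := ⟨(b - a).toNat, by omega⟩
    clear hab
    induction n with
    | zero => simp; linarith
    | succ n ih =>
      have h := hf (a + n + 1)
      have e : a + (n : ℤ) + 1 - 1 = a + n := by ring
      rw [e] at h
      have e2 : a + ((n : ℕ) + 1 : ℕ) = a + (n : ℤ) + 1 := by push_cast; ring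
      rw [e2]
      linarith
  obtain ⟨hl1, hu1⟩ := hs₁mem
  obtain ⟨hl2, hu2⟩ := hs₂mem
  constructor
  · by_contra h
    push_neg at h
    -- s₂ < s₁; show s₂ is a minimizer of W_q, contradicting leastness of s₁
    have hW : g s₂ + ν (q - s₂) ≤ g s₁ + ν (q - s₁) := by
      have h1 := hs₂min s₁ ⟨hl1, hu1⟩
      have h2 := inc ν hν (q - s₁) (q - s₂) (by omega)
      have e1 : q - s₁ + 1 = q + 1 - s₁ := by ring
      have e2 : q - s₂ + 1 = q + 1 - s₂ := by ring
      rw [e1, e2] at h2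
      linarith
    have : s₁ ≤ s₂ := hs₁least s₂ ⟨hl2, hu2⟩ (fun t ht => le_trans hW (hs₁min t ht))
    omega
  · by_contra h
    push_neg at h
    -- s₁ + 1 < s₂; show s₁+1 minimizes W_{q+1}
    have hmem : s₁ + 1 ∈ Set.Icc l u := ⟨by omega, by omega⟩
    have hW : g (s₁ + 1) + ν (q + 1 - (s₁ + 1)) ≤ g s₂ + ν (q + 1 - s₂) := by
      have h1 := hs₁min (s₂ - 1) ⟨by omega, by omega⟩
      have h2 := inc g hg s₁ (s₂ - 1) (by omega)
      have e1 : s₂ - 1 + 1 = s₂ := by ring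
      have e2 : q - (s₂ - 1) = q + 1 - s₂ := by ring
      have e3 : q + 1 - (s₁ + 1) = q - s₁ := by ring
      rw [e1] at h2
      rw [e2] at h1
      rw [e3]
      linarith
    have : s₂ ≤ s₁ + 1 :=
      hs₂least (s₁ + 1) hmem (fun t ht => le_trans hW (hs₂min t ht))
    omega
end

section
/- Let g : ℤ → ℝ and ν : ℤ → ℝ be discretely convex, and let K ≥ 0 and S ≥ 0 be integers. For q ∈ ℤ with 0 ≤ q ≤ S + K, define V(q) := min over s in the integer interval [max(q − K, 0), min(q, S)] of (g(s) + ν(q − s)) (this interval is nonempty for such q). Then V is discretely convex on its domain: for every integer q with 1 ≤ q and q + 1 ≤ S + K, V(q − 1) + V(q + 1) ≥ 2·V(q). -/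
lemma DiscreteConvex.inc {f : ℤ → ℝ} (hf : DiscreteConvex f) :
    ∀ i j : ℤ, i ≤ j → f (i + 1) - f i ≤ f (j + 1) - f j := by
  intro i j hij
  have key : ∀ n : ℕ, f (i + 1) - f i ≤ f (i + n + 1) - f (i + n) := by
    intro n
    induction n with
    | zero => simp
    | succ n ih =>
      have h := hf (i + n + 1)
      have e : i + (n : ℤ) + 1 - 1 = i + n := by ring
      rw [e] at h
      push_cast
      rw [show i + ((n : ℤ) + 1) + 1 = i + n + 1 + 1 by ring,
        show i + ((n : ℤ) + 1) = i + n + 1 by ring]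
      linarith
  have h := key (j - i).toNat
  rw [Int.toNat_of_nonneg (by omega)] at h
  rw [show i + (j - i) = j by ring] at h
  exact h

lemma DiscreteConvex.shift {f : ℤ → ℝ} (hf : DiscreteConvex f) :
    ∀ a y : ℤ, a ≤ y → ∀ t : ℕ, f (a + t) - f a ≤ f (y + t) - f y := by
  intro a y hay t
  induction t with
  | zero => simp
  | succ t ih =>
    have h := hf.inc (a + t) (y + t) (by omega)
    push_cast
    rw [show a + ((t : ℤ) + 1) = a + t + 1 by ring, show y + ((t : ℤ) + 1) = y + t + 1 by ring]
    linarith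

lemma DiscreteConvex.four {f : ℤ → ℝ} (hf : DiscreteConvex f)
    {a x y b : ℤ} (hax : a ≤ x) (hxy : x ≤ y) (hsum : x + y = a + b) :
    f x + f y ≤ f a + f b := by
  have ht : (x - a).toNat = x - a := Int.toNat_of_nonneg (by omega)
  have h := hf.shift a y (by omega) (x - a).toNat
  rw [ht] at h
  have hx : a + (x - a) = x := by ring
  have hb : y + (x - a) = b := by omega
  rw [hx, hb] at h
  linarith

/-- Inductive step (Eq. (34)) of Theorem 5 (Appendix B): minimizing
g(s) + ν(q − s) over the feasible rate interval [max(q−K,0), min(q,S)]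
preserves discrete convexity of the value function in q. -/
theorem value_iteration_preserves_convexity
    (g ν : ℤ → ℝ) (hg : DiscreteConvex g) (hν : DiscreteConvex ν)
    (K S : ℤ) (hK : 0 ≤ K) (hS : 0 ≤ S)
    (V : ℤ → ℝ)
    (hV : ∀ q : ℤ, 0 ≤ q → q ≤ S + K →
      IsLeast {y : ℝ | ∃ s : ℤ, max (q - K) 0 ≤ s ∧ s ≤ min q S ∧
        y = g s + ν (q - s)} (V q)) :
    ∀ q : ℤ, 1 ≤ q → q + 1 ≤ S + K → 2 * V q ≤ V (q - 1) + V (q + 1) := by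
  intro q hq1 hq2
  obtain ⟨⟨sm, hsm1, hsm2, hsmV⟩, hlbm⟩ := hV (q - 1) (by omega) (by omega)
  obtain ⟨⟨sp, hsp1, hsp2, hspV⟩, hlbp⟩ := hV (q + 1) (by omega) (by omega)
  obtain ⟨_, hlb⟩ := hV q (by omega) (by omega)
  have Vle : ∀ s : ℤ, max (q - K) 0 ≤ s → s ≤ min q S → V q ≤ g s + ν (q - s) := by
    intro s h1 h2
    exact hlb ⟨s, h1, h2, rfl⟩
  rcases le_or_gt sp sm with hc | hc
  · -- sp ≤ sm : use x = sp, y = sm for q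
    have hsp' : sp ≤ q := by omega
    have h1 : V q ≤ g sp + ν (q - sp) := Vle sp (by omega)
      (by omega)
    have h2 : V q ≤ g sm + ν (q - sm) := Vle sm (by omega)
      (by omega)
    have hnu : ν (q - sm) + ν (q - sp) ≤ ν (q - 1 - sm) + ν (q + 1 - sp) :=
      hν.four (a := q - 1 - sm) (by omega) (by omega) (by ring)
    rw [hsmV, hspV]; linarith
  · rcases eq_or_lt_of_le (by omega : sm + 1 ≤ sp) with hc2 | hc2
    · -- sp = sm + 1 : exact choice
      have h1 : V q ≤ g sm + ν (q - sm) := Vle sm (by omega)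
        (by omega)
      have h2 : V q ≤ g sp + ν (q - sp) := Vle sp (by omega)
        (by omega)
      have e1 : q - 1 - sm = q - sp := by omega
      have e2 : q + 1 - sp = q - sm := by omega
      rw [hsmV, hspV, e1, e2]; linarith
    · -- sm + 2 ≤ sp : use x = sm + 1, y = sp - 1
      have h1 : V q ≤ g (sm + 1) + ν (q - (sm + 1)) := Vle (sm + 1)
        (by omega) (by omega)
      have h2 : V q ≤ g (sp - 1) + ν (q - (sp - 1)) := Vle (sp - 1)
        (by omega) (by omega)
      have hgc : g (sm + 1) + g (sp - 1) ≤ g sm + g sp :=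
        hg.four (a := sm) (by omega) (by omega) (by ring)
      have e1 : q - (sm + 1) = q - 1 - sm := by ring
      have e2 : q - (sp - 1) = q + 1 - sp := by ring
      rw [e1] at h1; rw [e2] at h2
      rw [hsmV, hspV]; linarith
end

section
/- Let g₁, g₂, h : ℤ → ℝ and suppose g₂ has smaller increments than g₁: for all integers s ≤ s', g₂(s') − g₂(s) ≤ g₁(s') − g₁(s). Let l ≤ u be integers. If s₁ ∈ [l, u] minimizes g₁ + h over the integer interval [l, u], then there exists s₂ ∈ [l, u] with s₂ ≥ s₁ that minimizes g₂ + h over [l, u]. -/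
/-- Monotone comparative-statics step of Theorem 9 (Appendix D): if g₂ has
smaller increments than g₁, then some minimizer of g₂ + h over [l, u] is at
least as large as any given minimizer of g₁ + h over [l, u]. -/
theorem better_channel_larger_minimizer
    (g₁ g₂ h : ℤ → ℝ)
    (hcmp : ∀ s s' : ℤ, s ≤ s' → g₂ s' - g₂ s ≤ g₁ s' - g₁ s)
    (l u : ℤ) (hlu : l ≤ u) (s₁ : ℤ)
    (hs₁mem : s₁ ∈ Set.Icc l u)
    (hs₁min : ∀ s ∈ Set.Icc l u, g₁ s₁ + h s₁ ≤ g₁ s + h s) :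
    ∃ s₂ ∈ Set.Icc l u, s₁ ≤ s₂ ∧ ∀ s ∈ Set.Icc l u, g₂ s₂ + h s₂ ≤ g₂ s + h s := by
  obtain ⟨hl, hu⟩ := hs₁mem
  have hne : (Finset.Icc s₁ u).Nonempty := ⟨s₁, by simp [hu]⟩
  obtain ⟨s₂, hs₂mem, hs₂min⟩ :=
    Finset.exists_min_image (Finset.Icc s₁ u) (fun s => g₂ s + h s) hne
  rw [Finset.mem_Icc] at hs₂mem
  refine ⟨s₂, ⟨le_trans hl hs₂mem.1, hs₂mem.2⟩, hs₂mem.1, ?_⟩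
  intro s hs
  rcases le_or_gt s₁ s with hcase | hcase
  · exact hs₂min s (Finset.mem_Icc.mpr ⟨hcase, hs.2⟩)
  · have h1 : g₂ s₂ + h s₂ ≤ g₂ s₁ + h s₁ :=
      hs₂min s₁ (Finset.mem_Icc.mpr ⟨le_refl _, hu⟩)
    have h2 : g₂ s₁ - g₂ s ≤ g₁ s₁ - g₁ s := hcmp s s₁ hcase.le
    have h3 : g₁ s₁ + h s₁ ≤ g₁ s + h s := hs₁min s hs
    linarith
end
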